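/- arXiv:2311.10435 — 3 statements merged into one kernel-verified Lean document; each statement's English description precedes it below -/
import Mathlib

section
/- Let ≺ be a strict partial order on [n] such that for all 1 ≤ i < j < k ≤ n, (i ≺ k implies i ≺ j or j ≺ k) and (k ≺ i implies j ≺ i or k ≺ j). Then the set of linear extensions of ≺ (viewed as permutations of [n]) forms an interval of the right weak order on Sₙ. -/
/-!
A set `I` of pairs `a < b` is the inversion set of a permutation whenever it is closed
(`(a,b), (b,c) ∈ I → (a,c) ∈ I`) and coclosed (`(a,c) ∈ I → (a,b) ∈ I ∨ (b,c) ∈ I`): then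
reversing the pairs of `I` in the usual order gives a strict total order, and numbering the
elements along it gives the permutation. A permutation `ρ` is a linear extension of `≺` iff its inversions contain the
forced pairs `{(a,b) | a < b, b ≺ a}` and avoid the forbidden pairs `{(a,b) | a < b, a ≺ b}`.
For a partial order, the forced pairs are always closed and the non-forbidden ones coclosed;
the two hypotheses supply the missing halves, so both sets are inversion sets and the linear
extensions form the interval between the corresponding permutations.
-/

/-- The set of inversions of a permutation. -/
def winv {n : ℕ} (π : Equiv.Perm (Fin n)) : Set (Fin n × Fin n) :=
  {ab | ab.1 < ab.2 ∧ π⁻¹ ab.2 < π⁻¹ ab.1}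

/-- The right weak order: inclusion of inversion sets. -/
def wle {n : ℕ} (π σ : Equiv.Perm (Fin n)) : Prop := winv π ⊆ winv σ

/-- Linear extensions of a relation `r`: permutations whose one-line word lists
the elements in an order compatible with `r`. -/
def linExt {n : ℕ} (r : Fin n → Fin n → Prop) : Set (Equiv.Perm (Fin n)) :=
  {π | ∀ i j, r i j → π⁻¹ i < π⁻¹ j}

theorem exists_equiv_fin_lt_iff {α : Type*} [Fintype α] {n : ℕ} (hn : Fintype.card α = n)
    (s : α → α → Prop) [IsStrictTotalOrder α s] :
    ∃ e : α ≃ Fin n, ∀ a b, s a b ↔ e a < e b := by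
  classical
  let := linearOrderOfSTO s
  exact ⟨(Fintype.orderIsoFinOfCardEq α hn).symm.toEquiv,
    fun a b => (Fintype.orderIsoFinOfCardEq α hn).symm.lt_iff_lt.symm⟩

section FlipLt

variable {α : Type*} [LinearOrder α] (I : Set (α × α))

def flipLt (a b : α) : Prop := (a < b ∧ (a, b) ∉ I) ∨ (b < a ∧ (b, a) ∈ I)

theorem flipLt_swap_iff {a b : α} (hab : a < b) : flipLt I b a ↔ (a, b) ∈ I := by
  simp [flipLt, hab, hab.not_gt]

theorem isStrictTotalOrder_flipLt
    (hI_trans : ∀ a b c, a < b → b < c → (a, b) ∈ I → (b, c) ∈ I → (a, c) ∈ I)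
    (hI_split : ∀ a b c, a < b → b < c → (a, c) ∈ I → (a, b) ∈ I ∨ (b, c) ∈ I) :
    IsStrictTotalOrder α (flipLt I) where
  irrefl a := by simp [flipLt]
  trans a b c hab hbc := by
    unfold flipLt at *
    rcases lt_trichotomy a c with h | rfl | h <;> grind
  trichotomous a b := by
    unfold flipLt
    rcases lt_trichotomy a b with h | h | h <;> grind

end FlipLt

theorem exists_perm_winv_eq {n : ℕ} (I : Set (Fin n × Fin n))
    (hI_lt : ∀ a b, (a, b) ∈ I → a < b)
    (hI_trans : ∀ a b c, a < b → b < c → (a, b) ∈ I → (b, c) ∈ I → (a, c) ∈ I)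
    (hI_split : ∀ a b c, a < b → b < c → (a, c) ∈ I → (a, b) ∈ I ∨ (b, c) ∈ I) :
    ∃ π : Equiv.Perm (Fin n), winv π = I := by
  have := isStrictTotalOrder_flipLt I hI_trans hI_split
  obtain ⟨e, he⟩ := exists_equiv_fin_lt_iff (Fintype.card_fin n) (flipLt I)
  refine ⟨e.symm, Set.ext fun ⟨a, b⟩ => ?_⟩
  simp only [winv, Set.mem_ofPred_eq, Equiv.Perm.inv_def, Equiv.symm_symm, ← he]
  exact ⟨fun ⟨hab, h⟩ => (flipLt_swap_iff I hab).1 h,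
    fun h => ⟨hI_lt a b h, (flipLt_swap_iff I (hI_lt a b h)).2 h⟩⟩

section LinearExtensions

variable {n : ℕ} (r : Fin n → Fin n → Prop)

def forcedInv : Set (Fin n × Fin n) := {p | p.1 < p.2 ∧ r p.2 p.1}

def allowedInv : Set (Fin n × Fin n) := {p | p.1 < p.2 ∧ ¬ r p.1 p.2}

theorem mem_linExt_iff [Std.Irrefl r] (ρ : Equiv.Perm (Fin n)) :
    ρ ∈ linExt r ↔ forcedInv r ⊆ winv ρ ∧ winv ρ ⊆ allowedInv r := by
  constructor
  · intro hρ
    exact ⟨fun ⟨a, b⟩ ⟨hab, hba⟩ => ⟨hab, hρ b a hba⟩,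
      fun ⟨a, b⟩ ⟨hab, hinv⟩ => ⟨hab, fun hr => (hρ a b hr).not_gt hinv⟩⟩
  · rintro ⟨hforced, hallowed⟩ i j hij
    rcases lt_trichotomy i j with h | rfl | h
    · by_contra hle
      have hinv : ρ⁻¹ j < ρ⁻¹ i :=
        (not_lt.1 hle).lt_of_ne fun heq => (irrefl i) (ρ⁻¹.injective heq ▸ hij)
      exact (hallowed (a := (i, j)) ⟨h, hinv⟩).2 hij
    · exact absurd hij (irrefl i)
    · exact (hforced (a := (j, i)) ⟨h, hij⟩).2

theorem exists_perm_winv_eq_forcedInv [IsTrans (Fin n) r]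
    (h₂ : ∀ i j k : Fin n, i < j → j < k → r k i → r j i ∨ r k j) :
    ∃ π : Equiv.Perm (Fin n), winv π = forcedInv r :=
  exists_perm_winv_eq _ (fun _ _ h => h.1)
    (fun _ _ _ hab hbc h h' => ⟨hab.trans hbc, _root_.trans h'.2 h.2⟩)
    (fun a b c hab hbc h => (h₂ a b c hab hbc h.2).imp (⟨hab, ·⟩) (⟨hbc, ·⟩))

theorem exists_perm_winv_eq_allowedInv [IsTrans (Fin n) r]
    (h₁ : ∀ i j k : Fin n, i < j → j < k → r i k → r i j ∨ r j k) :
    ∃ π : Equiv.Perm (Fin n), winv π = allowedInv r := by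
  refine exists_perm_winv_eq _ (fun _ _ h => h.1)
    (fun a b c hab hbc h h' => ⟨hab.trans hbc, fun hac => ?_⟩)
    (fun a b c hab hbc h => ?_)
  · exact (h₁ a b c hab hbc hac).elim h.2 h'.2
  · by_cases hr : r a b
    · exact .inr ⟨hbc, fun hr' => h.2 (_root_.trans hr hr')⟩
    · exact .inl ⟨hab, hr⟩

end LinearExtensions

/-- Björner–Wachs: if a strict partial order ≺ on [n] satisfies the
interval condition, then its set of linear extensions is a weak order interval. -/
theorem stmt3 {n : ℕ} (r : Fin n → Fin n → Prop) [IsStrictOrder (Fin n) r]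
    (h₁ : ∀ i j k : Fin n, i < j → j < k → r i k → r i j ∨ r j k)
    (h₂ : ∀ i j k : Fin n, i < j → j < k → r k i → r j i ∨ r k j) :
    ∃ πbot πtop : Equiv.Perm (Fin n),
      linExt r = {ρ | wle πbot ρ ∧ wle ρ πtop} := by
  obtain ⟨πbot, hbot⟩ := exists_perm_winv_eq_forcedInv r h₂
  obtain ⟨πtop, htop⟩ := exists_perm_winv_eq_allowedInv r h₁
  refine ⟨πbot, πtop, Set.ext fun ρ => ?_⟩
  rw [mem_linExt_iff]
  simp only [wle, hbot, htop, Set.mem_ofPred_eq]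
end

section
/- Let ≺ be a strict partial order on [n] satisfying: for all i < j < k, i ≺ k implies (i ≺ j or j ≺ k), and k ≺ i implies (j ≺ i or k ≺ j). Then the minimum (in weak order) of the set of linear extensions of ≺ has as its inversion set exactly the pairs (i,j) with i < j and j ≺ i, and the maximum has as its noninversion set exactly the pairs (i,j) with i < j and i ≺ j. -/
def wninv {n : ℕ} (π : Equiv.Perm (Fin n)) : Set (Fin n × Fin n) :=
  {ab | ab.1 < ab.2 ∧ π⁻¹ ab.1 < π⁻¹ ab.2}

open Finset

section TieBreak

variable {α : Type*} {r lt : α → α → Prop}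

variable (r lt) in
def tieBreak (a b : α) : Prop := r a b ∨ (¬ r b a ∧ lt a b)

theorem le_tieBreak : r ≤ tieBreak r lt := fun _ _ h => Or.inl h

theorem tieBreak_iff_of_not_lt {a b : α} (h : ¬ lt a b) : tieBreak r lt a b ↔ r a b := by
  simp [tieBreak, h]

theorem tieBreak_iff_of_lt [IsStrictOrder α r] {a b : α} (h : lt a b) :
    tieBreak r lt a b ↔ ¬ r b a :=
  ⟨by rintro (hab | ⟨hba, -⟩); exacts [asymm hab, hba], fun hba => Or.inr ⟨hba, h⟩⟩

theorem tieBreak_asymm [IsStrictOrder α r] [IsStrictOrder α lt] {a b : α}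
    (hab : tieBreak r lt a b) : ¬ tieBreak r lt b a := by
  rintro (hba | ⟨hab', hba⟩) <;> rcases hab with hab | ⟨hba', hab⟩
  exacts [asymm hab hba, hba' hba, hab' hab, asymm hab hba]

theorem isStrictTotalOrder_tieBreak [IsStrictOrder α r] [IsStrictTotalOrder α lt]
    (hr : ∀ a b c, lt a b → lt b c → r c a → r b a ∨ r c b) :
    IsStrictTotalOrder α (tieBreak r lt) where
  trichotomous a b hab hba := by
    simp only [tieBreak, not_or, not_and] at hab hba
    exact Std.Trichotomous.trichotomous a b (hab.2 hba.1) (hba.2 hab.1)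
  irrefl a h := tieBreak_asymm h h
  trans a b c hab hbc := by
    by_cases hac : r a c
    · exact Or.inl hac
    have hca : ¬ r c a := by
      intro hca
      rcases hab with hab | ⟨hba, hab⟩ <;> rcases hbc with hbc | ⟨hcb, hbc⟩
      · exact hac (_root_.trans hab hbc)
      · exact hcb (_root_.trans hca hab)
      · exact hba (_root_.trans hbc hca)
      · exact (hr a b c hab hbc hca).elim hba hcb
    refine Or.inr ⟨hca, ?_⟩
    rcases trichotomous_of lt a c with hlt | rfl | hlt
    · exact hlt
    · exact (tieBreak_asymm hab hbc).elim
    · rcases hab with hab | ⟨hba, hab⟩ <;> rcases hbc with hbc | ⟨hcb, hbc⟩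
      · exact (hac (_root_.trans hab hbc)).elim
      · exact ((hr b c a hbc hlt hab).elim hcb hac).elim
      · exact ((hr c a b hlt hab hbc).elim hac hba).elim
      · exact (asymm (_root_.trans hab hbc) hlt).elim

end TieBreak

section Rank

variable {α : Type*} [Fintype α] (s : α → α → Prop) [DecidableRel s]

def rank (a : α) : ℕ := #{b | s b a}

theorem rank_lt_card [Std.Irrefl s] (a : α) : rank s a < Fintype.card α :=
  card_lt_univ_of_notMem (x := a) (by simp [irrefl a])

variable {s}

theorem rank_lt_rank [IsTrans α s] [Std.Irrefl s] {a b : α} (hab : s a b) :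
    rank s a < rank s b := by
  refine card_lt_card ((ssubset_iff_of_subset ?_).2 ⟨a, by simp [hab], by simp [irrefl a]⟩)
  exact monotone_filter_right _ fun c _ hca => _root_.trans hca hab

variable [IsStrictTotalOrder α s]

theorem rank_lt_rank_iff {a b : α} : rank s a < rank s b ↔ s a b := by
  refine ⟨fun h => ?_, rank_lt_rank⟩
  rcases trichotomous_of s a b with hab | rfl | hba
  exacts [hab, (lt_irrefl _ h).elim, ((rank_lt_rank hba).asymm h).elim]

theorem rank_injective : Function.Injective (rank s) := fun a b h =>
  Std.Trichotomous.trichotomous a b (fun hab => (rank_lt_rank hab).ne h)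
    (fun hba => (rank_lt_rank hba).ne' h)

end Rank

theorem exists_perm_inv_lt_iff {n : ℕ} (s : Fin n → Fin n → Prop) [IsStrictTotalOrder (Fin n) s] :
    ∃ π : Equiv.Perm (Fin n), ∀ i j, π⁻¹ i < π⁻¹ j ↔ s i j := by
  classical
  let f : Fin n → Fin n := fun i => ⟨rank s i, by simpa using rank_lt_card s i⟩
  have hf : f.Injective := fun i j h => rank_injective (Fin.mk.inj_iff.1 h)
  exact ⟨(Equiv.ofBijective f (Finite.injective_iff_bijective.1 hf)).symm,
    fun _ _ => Fin.mk_lt_mk.trans rank_lt_rank_iff⟩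

section WeakOrder

variable {n : ℕ} {r s : Fin n → Fin n → Prop} {π : Equiv.Perm (Fin n)}

theorem mem_linExt_of_le (hπ : ∀ i j, π⁻¹ i < π⁻¹ j ↔ s i j) (hrs : r ≤ s) : π ∈ linExt r :=
  fun i j h => (hπ i j).2 (hrs i j h)

theorem winv_eq_of_forall_inv_lt_iff (hπ : ∀ i j, π⁻¹ i < π⁻¹ j ↔ s i j) :
    winv π = {ij | ij.1 < ij.2 ∧ s ij.2 ij.1} :=
  Set.ext fun ij => and_congr_right fun _ => hπ ij.2 ij.1

theorem wninv_eq_of_forall_inv_lt_iff (hπ : ∀ i j, π⁻¹ i < π⁻¹ j ↔ s i j) :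
    wninv π = {ij | ij.1 < ij.2 ∧ s ij.1 ij.2} :=
  Set.ext fun ij => and_congr_right fun _ => hπ ij.1 ij.2

theorem setOf_lt_rel_subset_winv (hπ : π ∈ linExt r) :
    {ij : Fin n × Fin n | ij.1 < ij.2 ∧ r ij.2 ij.1} ⊆ winv π :=
  fun _ ⟨hlt, hr⟩ => ⟨hlt, hπ _ _ hr⟩

theorem winv_subset_setOf_lt_not_rel (hπ : π ∈ linExt r) :
    winv π ⊆ {ij : Fin n × Fin n | ij.1 < ij.2 ∧ ¬ r ij.1 ij.2} :=
  fun _ ⟨hlt, hinv⟩ => ⟨hlt, fun hr => (hπ _ _ hr).asymm hinv⟩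

end WeakOrder

/-- Under the Björner–Wachs interval condition, the minimum of the set of linear
extensions of ≺ has inversion set `{(i,j) | i < j ∧ j ≺ i}`, and the maximum has
noninversion set `{(i,j) | i < j ∧ i ≺ j}`. -/
theorem stmt4 {n : ℕ} (r : Fin n → Fin n → Prop) [IsStrictOrder (Fin n) r]
    (h₁ : ∀ i j k : Fin n, i < j → j < k → r i k → r i j ∨ r j k)
    (h₂ : ∀ i j k : Fin n, i < j → j < k → r k i → r j i ∨ r k j) :
    ∃ πbot ∈ linExt r, ∃ πtop ∈ linExt r,
      (∀ ρ ∈ linExt r, wle πbot ρ ∧ wle ρ πtop) ∧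
      winv πbot = {ij | ij.1 < ij.2 ∧ r ij.2 ij.1} ∧
      wninv πtop = {ij | ij.1 < ij.2 ∧ r ij.1 ij.2} := by
  have := isStrictTotalOrder_tieBreak (lt := (· < ·)) h₂
  have := isStrictTotalOrder_tieBreak (r := r) (lt := (· > ·))
    fun i j k hij hjk hki => (h₁ k j i hjk hij hki).symm
  obtain ⟨πbot, hbot⟩ := exists_perm_inv_lt_iff (tieBreak r (· < ·))
  obtain ⟨πtop, htop⟩ := exists_perm_inv_lt_iff (tieBreak r (· > ·))
  have hwinv_bot : winv πbot = {ij | ij.1 < ij.2 ∧ r ij.2 ij.1} :=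
    (winv_eq_of_forall_inv_lt_iff hbot).trans
      (Set.ext fun _ => and_congr_right fun hlt => tieBreak_iff_of_not_lt hlt.asymm)
  have hwinv_top : winv πtop = {ij | ij.1 < ij.2 ∧ ¬ r ij.1 ij.2} :=
    (winv_eq_of_forall_inv_lt_iff htop).trans
      (Set.ext fun _ => and_congr_right fun hlt => tieBreak_iff_of_lt hlt)
  refine ⟨πbot, mem_linExt_of_le hbot le_tieBreak, πtop, mem_linExt_of_le htop le_tieBreak,
    fun ρ hρ => ⟨?_, ?_⟩, hwinv_bot, ?_⟩
  · exact hwinv_bot.subset.trans (setOf_lt_rel_subset_winv hρ)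
  · exact (winv_subset_setOf_lt_not_rel hρ).trans hwinv_top.symm.subset
  · exact (wninv_eq_of_forall_inv_lt_iff htop).trans
      (Set.ext fun _ => and_congr_right fun hlt => tieBreak_iff_of_not_lt hlt.asymm)
end

section
/- Let L be a finite lattice and ≡ a lattice congruence on L. For two distinct congruence classes C₁, C₂, the class C₂ covers C₁ in the quotient lattice if and only if there exist x₁ ∈ C₁ and x₂ ∈ C₂ such that x₂ covers x₁ in L. -/
/-- `r` is a lattice congruence. -/
def IsLatticeCongruence {L : Type*} [Lattice L] (r : L → L → Prop) : Prop :=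
  Equivalence r ∧
    ∀ x x' y y' : L, r x x' → r y y' → r (x ⊓ y) (x' ⊓ y') ∧ r (x ⊔ y) (x' ⊔ y')

/-- The quotient order on congruence classes. -/
def qle {L : Type*} [Lattice L] (s : Setoid L) (C C' : Quotient s) : Prop :=
  ∃ x x' : L, Quotient.mk s x = C ∧ Quotient.mk s x' = C' ∧ x ≤ x'

/-- `C'` covers `C` in the quotient order. -/
def qCovers {L : Type*} [Lattice L] (s : Setoid L) (C C' : Quotient s) : Prop :=
  qle s C C' ∧ C ≠ C' ∧ ∀ D, qle s C D → qle s D C' → D = C ∨ D = C'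

/-!
For `⇒`, pick an element `a` of `C₁` maximal below some `b ∈ C₂`, and an
element `z` covering `a` with `z ≤ b`; the class of `z` lies between `C₁` and `C₂`, and it is not
`C₁` by maximality of `a`, so it is `C₂`.
For `⇐`, if `x₁ ⋖ x₂` and a class `D ∋ d` lies between, then `(x₁ ⊔ d) ⊓ x₂` stays in `D`
because a congruence class absorbs joins and meets with representatives of comparable classes;
being squeezed between `x₁` and `x₂`, it is one of them.
-/

namespace IsLatticeCongruence

variable {L : Type*} [Lattice L] {s : Setoid L}

lemma mk_inf_eq_of_qle (hcong : IsLatticeCongruence s.r) {a b : L}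
    (h : qle s (Quotient.mk s a) (Quotient.mk s b)) :
    Quotient.mk s (a ⊓ b) = Quotient.mk s a := by
  obtain ⟨x, x', hx, hx', hxx'⟩ := h
  have hinf := (hcong.2 a x b x' (Quotient.exact hx.symm) (Quotient.exact hx'.symm)).1
  rw [inf_eq_left.mpr hxx'] at hinf
  exact (Quotient.sound hinf).trans hx

lemma mk_sup_eq_of_qle (hcong : IsLatticeCongruence s.r) {a b : L}
    (h : qle s (Quotient.mk s a) (Quotient.mk s b)) :
    Quotient.mk s (a ⊔ b) = Quotient.mk s b := by
  obtain ⟨x, x', hx, hx', hxx'⟩ := h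
  have hsup := (hcong.2 a x b x' (Quotient.exact hx.symm) (Quotient.exact hx'.symm)).2
  rw [sup_eq_right.mpr hxx'] at hsup
  exact (Quotient.sound hsup).trans hx'

lemma qCovers_of_covBy (hcong : IsLatticeCongruence s.r) {x₁ x₂ : L}
    (hne : Quotient.mk s x₁ ≠ Quotient.mk s x₂) (h : x₁ ⋖ x₂) :
    qCovers s (Quotient.mk s x₁) (Quotient.mk s x₂) := by
  refine ⟨⟨x₁, x₂, rfl, rfl, h.le⟩, hne, fun D h₁D hD₂ => ?_⟩
  induction D using Quotient.inductionOn with | h d => ?_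
  have hsup : Quotient.mk s (x₁ ⊔ d) = Quotient.mk s d := hcong.mk_sup_eq_of_qle h₁D
  have hmid : Quotient.mk s ((x₁ ⊔ d) ⊓ x₂) = Quotient.mk s d :=
    (hcong.mk_inf_eq_of_qle (hsup ▸ hD₂)).trans hsup
  exact (h.eq_or_eq (le_inf le_sup_left h.le) inf_le_right).imp
    (fun hy => hmid.symm.trans (congrArg _ hy)) (fun hy => hmid.symm.trans (congrArg _ hy))

end IsLatticeCongruence

lemma exists_covBy_of_qCovers {L : Type*} [Lattice L] [Finite L] {s : Setoid L}
    {C₁ C₂ : Quotient s} (h : qCovers s C₁ C₂) :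
    ∃ x₁ x₂ : L, Quotient.mk s x₁ = C₁ ∧ Quotient.mk s x₂ = C₂ ∧ x₁ ⋖ x₂ := by
  obtain ⟨⟨a₀, b, ha₀, hb, ha₀b⟩, hne, hbetween⟩ := h
  obtain ⟨a, -, ⟨haC, hab⟩, hamax⟩ :=
    Finite.exists_le_maximal (p := fun z => Quotient.mk s z = C₁ ∧ z ≤ b) ⟨ha₀, ha₀b⟩
  have hlt : a < b := hab.lt_of_ne fun hab => hne (haC.symm.trans (hab ▸ hb))
  obtain ⟨z, haz, hzb⟩ := (IsStronglyAtomic.of_wellFounded_lt wellFounded_lt).exists_covBy_le_of_lt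
    a b hlt
  rcases hbetween (Quotient.mk s z) ⟨a, z, haC, rfl, haz.le⟩ ⟨z, b, rfl, hb, hzb⟩ with hzC | hzC
  · exact absurd (hamax ⟨hzC, hzb⟩ haz.le) haz.lt.not_ge
  · exact ⟨a, z, haC, hzC, haz⟩

/-- For a lattice congruence on a finite lattice, `C₂` covers `C₁` in the
quotient lattice iff some element of `C₂` covers some element of `C₁` in `L`. -/
theorem stmt7 {L : Type*} [Lattice L] [Fintype L] (s : Setoid L)
    (hcong : IsLatticeCongruence s.r)
    (C₁ C₂ : Quotient s) (hne : C₁ ≠ C₂) :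
    qCovers s C₁ C₂ ↔
      ∃ x₁ x₂ : L, Quotient.mk s x₁ = C₁ ∧ Quotient.mk s x₂ = C₂ ∧ x₁ ⋖ x₂ := by
  refine ⟨exists_covBy_of_qCovers, ?_⟩
  rintro ⟨x₁, x₂, rfl, rfl, hcov⟩
  exact hcong.qCovers_of_covBy hne hcov
end
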